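/- There exists a constant C > 0 such that for every real λ ≠ 0 one has c(λ) ≠ 0 and |c(λ)|^{−2} ≤ C · λ² · (1 + |λ|)^{n−3}. -/

import Mathlib

/-!
On vertical lines the Gamma factors are controlled by the reflection formula: it gives
`|Γ(it)|² = π / (t sinh πt)` and `|Γ(1/2 + it)|² = π / cosh πt`, and the recursion
`Γ(z + 1) = z Γ(z)` then yields `|Γ(it + N/2)|² ≤ C (1 + t)^(N-1) e^(-πt)` for every `N ≥ 1`.
For even `m` both Gamma factors in the denominator of `c` are of this form, and their decay
`e^(-2πt)` exactly compensates the growth of `|Γ(2it)|⁻² = 2t sinh(2πt) / π`.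
Since `c(-λ) = conj c(λ)` it suffices to treat `λ > 0`.
-/

/-- The Harish–Chandra `c`-function of a Damek–Ricci space with parameters `m, k`:
`c(λ) = Γ(n/2) 2^{Q-2iλ} Γ(2iλ) / (Γ(iλ + Q/2) Γ(iλ + m/4 + 1/2))`,
where `Q = m/2 + k` and `n = m + k + 1`. -/
noncomputable def cFun (m k : ℕ) (z : ℂ) : ℂ :=
  Complex.Gamma (((m : ℂ) + k + 1) / 2) *
    (2 : ℂ) ^ (((m : ℂ) / 2 + k) - 2 * Complex.I * z) *
    Complex.Gamma (2 * Complex.I * z) /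
    (Complex.Gamma (Complex.I * z + ((m : ℂ) / 2 + k) / 2) *
      Complex.Gamma (Complex.I * z + (m : ℂ) / 4 + 1 / 2))

open Real ComplexConjugate

namespace Real

lemma exp_le_two_mul_cosh (x : ℝ) : exp x ≤ 2 * cosh x := by
  rw [cosh_eq]; linarith [exp_pos (-x)]

lemma mul_exp_le_two_mul_one_add_mul_sinh {x : ℝ} (hx : 0 ≤ x) :
    x * exp x ≤ 2 * ((1 + x) * sinh x) := by
  have h : 1 + 2 * x ≤ exp x * exp x := by
    rw [← exp_add, ← two_mul]; linarith [add_one_le_exp (2 * x)]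
  have hinv : exp x * exp (-x) = 1 := by rw [← exp_add]; simp
  rw [sinh_eq]
  nlinarith [exp_pos x, exp_pos (-x)]

lemma one_add_mul_sinh_le {x : ℝ} (hx : 0 ≤ x) : (1 + x) * sinh x ≤ 2 * x * exp x := by
  have hinv : exp x * exp (-x) = 1 := by rw [← exp_add]; simp
  have h : exp x - exp (-x) ≤ 2 * x * exp x := by
    nlinarith [add_one_le_exp (-x), exp_pos x, exp_pos (-x), exp_le_one_iff.2 (neg_nonpos.2 hx)]
  rw [sinh_eq]
  nlinarith [exp_pos x, exp_pos (-x)]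

end Real

namespace Complex

lemma norm_Gamma_mul_I_sq {t : ℝ} (ht : t ≠ 0) :
    ‖Gamma (I * t)‖ ^ 2 = π / (t * Real.sinh (π * t)) := by
  have hz : I * t ≠ 0 := by simp [ht]
  have hs : Real.sinh (π * t) ≠ 0 := by simp [ht, pi_ne_zero]
  have hsin : sin (π * (I * t)) = Real.sinh (π * t) * I := by
    rw [show (π : ℂ) * (I * t) = ((π * t : ℝ) : ℂ) * I by push_cast; ring, sin_mul_I,
      ofReal_sinh]
  have hconj : Gamma (1 - I * t) = -(I * t) * conj (Gamma (I * t)) := by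
    rw [← Gamma_conj, show 1 - I * t = conj (I * t) + 1 by simp [sub_eq_neg_add],
      Gamma_add_one _ (by simpa using hz)]
    simp
  have key := Gamma_mul_Gamma_one_sub (I * t)
  rw [hconj, hsin, mul_left_comm, mul_conj,
    eq_div_iff (mul_ne_zero (ofReal_ne_zero.2 hs) I_ne_zero)] at key
  have hreal : normSq (Gamma (I * t)) * (t * Real.sinh (π * t)) = π := by
    apply ofReal_injective
    rw [ofReal_mul, ofReal_mul]
    linear_combination key + (normSq (Gamma (I * t)) * t * Real.sinh (π * t) : ℂ) * I_sq
  rw [← normSq_eq_norm_sq, eq_div_iff (mul_ne_zero ht hs), hreal]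

lemma norm_Gamma_mul_I_add_half_sq (t : ℝ) :
    ‖Gamma (I * t + 1 / 2)‖ ^ 2 = π / Real.cosh (π * t) := by
  have hsin : sin (π * (I * t + 1 / 2)) = Real.cosh (π * t) := by
    rw [show (π : ℂ) * (I * t + 1 / 2) = ((π * t : ℝ) : ℂ) * I + π / 2 by push_cast; ring,
      sin_add_pi_div_two, cos_mul_I, ofReal_cosh]
  have key := Gamma_mul_Gamma_one_sub (I * t + 1 / 2)
  rw [show 1 - (I * t + 1 / 2) = conj (I * t + 1 / 2) by simp [Complex.ext_iff]; norm_num,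
    Gamma_conj, mul_conj, hsin, ← ofReal_div] at key
  rw [← normSq_eq_norm_sq]
  exact_mod_cast key

lemma norm_Gamma_mul_I_add_one_sq {t : ℝ} (ht : t ≠ 0) :
    ‖Gamma (I * t + 1)‖ ^ 2 = π * t / Real.sinh (π * t) := by
  rw [Gamma_add_one _ (by simp [ht]), norm_mul, mul_pow, norm_Gamma_mul_I_sq ht]
  simp only [norm_mul, norm_I, norm_real, Real.norm_eq_abs, one_mul, sq_abs]
  field_simp

lemma norm_Gamma_mul_I_add_half_sq_le (t : ℝ) :
    ‖Gamma (I * t + 1 / 2)‖ ^ 2 ≤ 2 * π * Real.exp (-(π * t)) := by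
  rw [norm_Gamma_mul_I_add_half_sq, div_le_iff₀ (Real.cosh_pos _)]
  have h := Real.exp_le_two_mul_cosh (π * t)
  have hinv : Real.exp (-(π * t)) * Real.exp (π * t) = 1 := by rw [← Real.exp_add]; simp
  calc π = π * (Real.exp (-(π * t)) * Real.exp (π * t)) := by rw [hinv, mul_one]
    _ ≤ π * (Real.exp (-(π * t)) * (2 * Real.cosh (π * t))) := by gcongr
    _ = 2 * π * Real.exp (-(π * t)) * Real.cosh (π * t) := by ring

lemma norm_Gamma_mul_I_add_one_sq_le {t : ℝ} (ht : 0 < t) :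
    ‖Gamma (I * t + 1)‖ ^ 2 ≤ 2 * π * (1 + t) * Real.exp (-(π * t)) := by
  have hx : 0 < π * t := by positivity
  rw [norm_Gamma_mul_I_add_one_sq ht.ne', div_le_iff₀ (Real.sinh_pos_iff.2 hx)]
  have h := Real.mul_exp_le_two_mul_one_add_mul_sinh hx.le
  have hinv : Real.exp (-(π * t)) * Real.exp (π * t) = 1 := by rw [← Real.exp_add]; simp
  have hpi : 1 + π * t ≤ π * (1 + t) := by nlinarith [pi_gt_three]
  nlinarith [mul_le_mul_of_nonneg_left h (Real.exp_pos (-(π * t))).le,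
    mul_le_mul_of_nonneg_right hpi
      (mul_pos (Real.exp_pos (-(π * t))) (Real.sinh_pos_iff.2 hx)).le]

lemma exists_norm_Gamma_mul_I_add_half_nat_sq_le (N : ℕ) :
    ∃ C > 0, ∀ t : ℝ, 0 < t →
      ‖Gamma (I * t + (N + 1) / 2)‖ ^ 2 ≤ C * (1 + t) ^ N * Real.exp (-(π * t)) := by
  induction N using Nat.twoStepInduction with
  | zero =>
    exact ⟨2 * π, by positivity, fun t _ => by simpa using norm_Gamma_mul_I_add_half_sq_le t⟩
  | one =>
    refine ⟨2 * π, by positivity, fun t ht => ?_⟩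
    simpa [add_halves] using norm_Gamma_mul_I_add_one_sq_le ht
  | more N ih _ =>
    obtain ⟨C, hC, hbound⟩ := ih
    refine ⟨(N + 1) ^ 2 * C, by positivity, fun t ht => ?_⟩
    set z := I * t + (N + 1) / 2
    have hz : z ≠ 0 := fun h => Nat.cast_add_one_ne_zero N (by simpa [z] using congrArg re h)
    have hnorm : ‖z‖ ≤ (N + 1) * (1 + t) :=
      calc ‖z‖ ≤ ‖I * t‖ + ‖((N + 1) / 2 : ℂ)‖ := norm_add_le _ _
        _ = t + (N + 1) / 2 := by
          rw [norm_mul, norm_I, norm_real, Real.norm_of_nonneg ht.le, one_mul]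
          norm_cast
          rw [norm_div, Complex.norm_natCast]
          norm_num
        _ ≤ (N + 1) * (1 + t) := by nlinarith
    rw [show I * t + ((N + 2 : ℕ) + 1) / 2 = z + 1 by push_cast; ring, Gamma_add_one _ hz,
      norm_mul, mul_pow]
    calc ‖z‖ ^ 2 * ‖Gamma z‖ ^ 2
        ≤ ((N + 1) * (1 + t)) ^ 2 * (C * (1 + t) ^ N * Real.exp (-(π * t))) := by
          gcongr
          exact hbound t ht
      _ = (N + 1) ^ 2 * C * (1 + t) ^ (N + 2) * Real.exp (-(π * t)) := by ring

lemma Gamma_ne_zero_of_im_ne_zero {s : ℂ} (hs : s.im ≠ 0) : Gamma s ≠ 0 :=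
  Gamma_ne_zero fun n h => hs (by simp [h])

end Complex

open Complex

lemma cFun_neg_conj (m k : ℕ) (z : ℂ) : cFun m k (-conj z) = conj (cFun m k z) := by
  have hpow (w : ℂ) : conj ((2 : ℂ) ^ w) = 2 ^ conj w := by
    rw [cpow_conj _ _ (by simpa using pi_ne_zero.symm), map_ofNat]
  simp only [cFun, map_div₀, map_mul, map_add, map_sub, map_natCast, map_ofNat, map_one, conj_I,
    ← Gamma_conj, hpow]
  ring_nf

lemma cFun_ofReal_ne_zero (m k : ℕ) {t : ℝ} (ht : t ≠ 0) : cFun m k t ≠ 0 := by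
  unfold cFun
  refine div_ne_zero (mul_ne_zero (mul_ne_zero ?_ ?_) ?_) (mul_ne_zero ?_ ?_)
  · exact Gamma_ne_zero_of_re_pos (by simp; positivity)
  · simp
  all_goals exact Gamma_ne_zero_of_im_ne_zero (by simp [ht])

lemma inv_norm_cFun_ofReal_sq (m k : ℕ) (t : ℝ) :
    (‖cFun m k t‖⁻¹) ^ 2 =
      ‖Gamma (I * t + ((m : ℂ) / 2 + k) / 2)‖ ^ 2 * ‖Gamma (I * t + (m : ℂ) / 4 + 1 / 2)‖ ^ 2 *
        (‖Gamma (2 * I * t)‖⁻¹) ^ 2 /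
          (‖Gamma (((m : ℂ) + k + 1) / 2)‖ * 2 ^ ((m : ℝ) / 2 + k)) ^ 2 := by
  have h2 : ‖(2 : ℂ) ^ (((m : ℂ) / 2 + k) - 2 * I * t)‖ = 2 ^ ((m : ℝ) / 2 + k) := by
    rw [← ofReal_ofNat, norm_cpow_eq_rpow_re_of_pos two_pos]
    simp
  rw [cFun, norm_div, norm_mul, norm_mul, norm_mul, h2, inv_div]
  ring

lemma one_add_mul_inv_norm_Gamma_two_mul_I_sq_le {t : ℝ} (ht : 0 < t) :
    (1 + t) * (‖Gamma (2 * I * t)‖⁻¹) ^ 2 ≤ 8 * t ^ 2 * Real.exp (2 * π * t) := by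
  have hx : 0 ≤ 2 * π * t := by positivity
  have hsinh := Real.one_add_mul_sinh_le hx
  have hpi : 1 + t ≤ 1 + 2 * π * t := by nlinarith [pi_gt_three]
  rw [show 2 * I * t = I * ((2 * t : ℝ) : ℂ) by push_cast; ring, inv_pow,
    norm_Gamma_mul_I_sq (by positivity), inv_div, show π * (2 * t) = 2 * π * t by ring]
  calc (1 + t) * (2 * t * Real.sinh (2 * π * t) / π)
      = (1 + t) * Real.sinh (2 * π * t) * (2 * t / π) := by ring
    _ ≤ (1 + 2 * π * t) * Real.sinh (2 * π * t) * (2 * t / π) := by gcongr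
    _ ≤ 2 * (2 * π * t) * Real.exp (2 * π * t) * (2 * t / π) := by gcongr
    _ = 8 * t ^ 2 * Real.exp (2 * π * t) := by field_simp; ring

lemma exists_Gamma_quotient_sq_le (N₁ N₂ : ℕ) :
    ∃ C > 0, ∀ t : ℝ, 0 < t →
      ‖Gamma (I * t + (N₁ + 1) / 2)‖ ^ 2 * ‖Gamma (I * t + (N₂ + 1) / 2)‖ ^ 2 *
          (‖Gamma (2 * I * t)‖⁻¹) ^ 2 ≤ C * t ^ 2 * (1 + t) ^ (N₁ + N₂ - 1) := by
  obtain ⟨C₁, hC₁, hA⟩ := exists_norm_Gamma_mul_I_add_half_nat_sq_le N₁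
  obtain ⟨C₂, hC₂, hB⟩ := exists_norm_Gamma_mul_I_add_half_nat_sq_le N₂
  refine ⟨8 * C₁ * C₂, by positivity, fun t ht => ?_⟩
  have hA := hA t ht
  have hB := hB t ht
  have hG := one_add_mul_inv_norm_Gamma_two_mul_I_sq_le ht
  have hpow : (1 + t) ^ (N₁ + N₂) ≤ (1 + t) ^ (N₁ + N₂ - 1) * (1 + t) := by
    rw [← pow_succ]
    exact pow_le_pow_right₀ (by linarith) (by omega)
  have hexp : Real.exp (-(π * t)) * Real.exp (-(π * t)) * Real.exp (2 * π * t) = 1 := by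
    rw [← Real.exp_add, ← Real.exp_add]; ring_nf; exact Real.exp_zero
  set e := Real.exp (-(π * t))
  set g := (‖Gamma (2 * I * t)‖⁻¹) ^ 2
  calc _ ≤ C₁ * (1 + t) ^ N₁ * e * (C₂ * (1 + t) ^ N₂ * e) * g := by gcongr
    _ = C₁ * C₂ * (1 + t) ^ (N₁ + N₂) * (e * e) * g := by ring
    _ ≤ C₁ * C₂ * ((1 + t) ^ (N₁ + N₂ - 1) * (1 + t)) * (e * e) * g := by gcongr
    _ = C₁ * C₂ * (1 + t) ^ (N₁ + N₂ - 1) * (e * e) * ((1 + t) * g) := by ring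
    _ ≤ C₁ * C₂ * (1 + t) ^ (N₁ + N₂ - 1) * (e * e) * (8 * t ^ 2 * Real.exp (2 * π * t)) := by
        gcongr
    _ = 8 * C₁ * C₂ * t ^ 2 * (1 + t) ^ (N₁ + N₂ - 1) := by
        rw [← mul_one (8 * C₁ * C₂ * t ^ 2 * _), ← hexp]
        ring

lemma exists_inv_norm_cFun_sq_le (m k : ℕ) (hm : Even m) (hk : 1 ≤ k) :
    ∃ C > 0, ∀ t : ℝ, 0 < t →
      (‖cFun m k t‖⁻¹) ^ 2 ≤ C * t ^ 2 * (1 + t) ^ (m + k + 1 - 3) := by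
  obtain ⟨p, rfl⟩ := hm
  obtain ⟨C, hC, hbound⟩ := exists_Gamma_quotient_sq_le (p + k - 1) p
  set K := ‖Gamma ((((p + p : ℕ) : ℂ) + k + 1) / 2)‖ * 2 ^ (((p + p : ℕ) : ℝ) / 2 + k) with hK
  have hKpos : 0 < K := by
    have : Gamma ((((p + p : ℕ) : ℂ) + k + 1) / 2) ≠ 0 :=
      Gamma_ne_zero_of_re_pos (by simp; positivity)
    positivity
  refine ⟨C / K ^ 2, by positivity, fun t ht => ?_⟩
  have hA : I * t + (((p + p : ℕ) : ℂ) / 2 + k) / 2 = I * t + (((p + k - 1 : ℕ) : ℂ) + 1) / 2 := by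
    push_cast [Nat.cast_sub (by omega : 1 ≤ p + k)]
    ring
  have hB : I * t + ((p + p : ℕ) : ℂ) / 4 + 1 / 2 = I * t + ((p : ℂ) + 1) / 2 := by
    push_cast
    ring
  rw [inv_norm_cFun_ofReal_sq, ← hK, hA, hB, show p + p + k + 1 - 3 = p + k - 1 + p - 1 by omega]
  calc _ ≤ C * t ^ 2 * (1 + t) ^ (p + k - 1 + p - 1) / K ^ 2 :=
        div_le_div_of_nonneg_right (hbound t ht) (by positivity)
    _ = _ := by ring

lemma norm_cFun_ofReal_abs (m k : ℕ) (t : ℝ) : ‖cFun m k (|t| : ℝ)‖ = ‖cFun m k t‖ := by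
  rcases abs_choice t with h | h <;> rw [h]
  simpa using congrArg norm (cFun_neg_conj m k t)

theorem stmt3_general (m k : ℕ) (hm : Even m) (hk : 1 ≤ k) :
    ∃ C : ℝ, 0 < C ∧ ∀ lam : ℝ, lam ≠ 0 →
      cFun m k (lam : ℂ) ≠ 0 ∧
      ((‖cFun m k (lam : ℂ)‖)⁻¹) ^ 2 ≤
        C * lam ^ 2 * (1 + |lam|) ^ (m + k + 1 - 3) := by
  obtain ⟨C, hC, hbound⟩ := exists_inv_norm_cFun_sq_le m k hm hk
  refine ⟨C, hC, fun lam hlam => ⟨cFun_ofReal_ne_zero m k hlam, ?_⟩⟩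
  rw [← norm_cFun_ofReal_abs, ← sq_abs lam]
  exact hbound |lam| (abs_pos.2 hlam)

/-- There is `C > 0` such that for all real `λ ≠ 0`, `c(λ) ≠ 0` and
`|c(λ)|⁻² ≤ C λ² (1 + |λ|)^{n-3}`, where `n = m + k + 1`. -/
theorem stmt3 (m k : ℕ) (hm : Even m) (hm2 : 2 ≤ m) (hk : 1 ≤ k) :
    ∃ C : ℝ, 0 < C ∧ ∀ lam : ℝ, lam ≠ 0 →
      cFun m k (lam : ℂ) ≠ 0 ∧
      ((‖cFun m k (lam : ℂ)‖)⁻¹) ^ 2 ≤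
        C * lam ^ 2 * (1 + |lam|) ^ (m + k + 1 - 3) :=
  stmt3_general m k hm hk
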